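/- For all real numbers t, T with 0 ≤ t ≤ T, one has (1 − tanh(T/2)²) / (1 − tanh(t/2)²) ≤ 4·exp(t − T). -/

import Mathlib

/-!
Since `1 - tanh² x = 1 / cosh² x`, the ratio is `(cosh (t/2) / cosh (T/2))²`, and the two
elementary bounds `cosh x ≤ exp |x|` and `exp x / 2 ≤ cosh x` give
`cosh (t/2) / cosh (T/2) ≤ 2 exp ((|t| - T) / 2)`.
-/

namespace Real

theorem one_sub_tanh_sq (x : ℝ) : 1 - tanh x ^ 2 = (cosh x ^ 2)⁻¹ := by
  have hcosh : cosh x ≠ 0 := (cosh_pos x).ne'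
  rw [tanh_eq_sinh_div_cosh, div_pow, cosh_sq']
  field_simp
  ring

theorem cosh_le_exp_abs (x : ℝ) : cosh x ≤ exp |x| := by
  rw [← cosh_abs, ← cosh_add_sinh |x|]
  exact le_add_of_nonneg_right (sinh_nonneg_iff.mpr (abs_nonneg x))

theorem exp_div_two_le_cosh (x : ℝ) : exp x / 2 ≤ cosh x := by
  rw [cosh_eq]
  gcongr
  exact le_add_of_nonneg_right (exp_pos (-x)).le

theorem cosh_div_cosh_le (x y : ℝ) : cosh x / cosh y ≤ 2 * exp (|x| - y) := by
  calc cosh x / cosh y ≤ exp |x| / (exp y / 2) :=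
        div_le_div₀ (exp_pos _).le (cosh_le_exp_abs x) (by positivity) (exp_div_two_le_cosh y)
    _ = 2 * exp (|x| - y) := by rw [exp_sub]; ring

theorem one_sub_tanh_sq_div_le (t T : ℝ) :
    (1 - tanh (T / 2) ^ 2) / (1 - tanh (t / 2) ^ 2) ≤ 4 * exp (|t| - T) := by
  have hratio : cosh (t / 2) / cosh (T / 2) ≤ 2 * exp ((|t| - T) / 2) := by
    simpa only [abs_div, abs_two, sub_div] using cosh_div_cosh_le (t / 2) (T / 2)
  calc (1 - tanh (T / 2) ^ 2) / (1 - tanh (t / 2) ^ 2)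
        = (cosh (t / 2) / cosh (T / 2)) ^ 2 := by
          rw [one_sub_tanh_sq, one_sub_tanh_sq, inv_div_inv, div_pow]
    _ ≤ (2 * exp ((|t| - T) / 2)) ^ 2 := by
          gcongr
    _ = 4 * exp (|t| - T) := by
          rw [mul_pow, ← exp_nat_mul, Nat.cast_ofNat, mul_div_cancel₀ _ two_ne_zero]
          norm_num

end Real

theorem tanh_ratio_le_exp_general (t T : ℝ) (h0 : 0 ≤ t) :
    (1 - Real.tanh (T / 2) ^ 2) / (1 - Real.tanh (t / 2) ^ 2) ≤ 4 * Real.exp (t - T) := by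
  simpa only [abs_of_nonneg h0] using Real.one_sub_tanh_sq_div_le t T

/-- Analytic core of Lemma 3.6: `(1 - tanh(T/2)²)/(1 - tanh(t/2)²) ≤ 4 exp (t - T)`
for `0 ≤ t ≤ T`. -/
theorem tanh_ratio_le_exp (t T : ℝ) (h0 : 0 ≤ t) (h1 : t ≤ T) :
    (1 - Real.tanh (T / 2) ^ 2) / (1 - Real.tanh (t / 2) ^ 2) ≤ 4 * Real.exp (t - T) :=
  tanh_ratio_le_exp_general t T h0
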